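/- arXiv:1311.6958 — 2 statements merged into one kernel-verified Lean document; each statement's English description precedes it below -/
import Mathlib

section
/- Let k = 2^s, let I ⊆ [k] be an interval of consecutive integers, and for i ∈ [s] let ∂̃_i(I) denote the set of z ∈ [k] whose i-th binary digit (of z-1) is 0 and such that exactly one of z, z + 2^{i-1} lies in I. Then |∂̃_i(I)| ≤ 2^i, and moreover |∂̃_i(I)| ≤ 2|I|. -/
/-- The direction-`i` edge-boundary in the hypercube `{0,1}^s ≃ [k]` (binary expansion) of
`B ⊆ [k]`: the set of `z ∈ [k]` whose `i`-th binary digit of `z-1` is `0` and such that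
exactly one of `z`, `z + 2^(i-1)` lies in `B`. -/
def cubeBoundaryDir (k i : ℕ) (B : Finset ℕ) : ℕ :=
  ((Finset.Icc 1 k).filter
    (fun z => (z - 1).testBit (i - 1) = false ∧ ((z ∈ B) ≠ (z + 2 ^ (i - 1) ∈ B)))).card

/-- For `k = 2^s`, an interval `I = {a,...,b} ⊆ [k]`, and `i ∈ [s]`,
we have `|∂̃_i(I)| ≤ 2^i` and `|∂̃_i(I)| ≤ 2|I|`. -/
theorem stmt3 (s k a b i : ℕ) (hs : 0 < s) (hk : k = 2 ^ s)
    (ha : 1 ≤ a) (hbk : b ≤ k) (hi : i ∈ Finset.Icc 1 s) :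
    cubeBoundaryDir k i (Finset.Icc a b) ≤ 2 ^ i ∧
    cubeBoundaryDir k i (Finset.Icc a b) ≤ 2 * (Finset.Icc a b).card := by
  obtain ⟨hi1, his⟩ := Finset.mem_Icc.mp hi
  set m := 2 ^ (i - 1) with hm
  unfold cubeBoundaryDir
  rw [← hm]
  set S := (Finset.Icc 1 k).filter
    (fun z => (z - 1).testBit (i - 1) = false ∧
      ((z ∈ Finset.Icc a b) ≠ (z + m ∈ Finset.Icc a b))) with hS
  have hpow : 2 ^ i = 2 * m := by
    rw [hm, ← pow_succ']
    congr 1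
    omega
  have key : ∀ z ∈ S, ¬((a ≤ z ∧ z ≤ b) ↔ (a ≤ z + m ∧ z + m ≤ b)) ∧ 1 ≤ z := by
    intro z hz
    rw [hS, Finset.mem_filter, Finset.mem_Icc] at hz
    obtain ⟨⟨hz1, _⟩, _, hne⟩ := hz
    refine ⟨?_, hz1⟩
    simp only [ne_eq, eq_iff_iff, Finset.mem_Icc] at hne
    exact hne
  constructor
  · have hsub : S ⊆ Finset.Icc (b + 1 - m) b ∪ Finset.Icc (a - m) (a - 1) := by
      intro z hz
      obtain ⟨hne, hz1⟩ := key z hz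
      simp only [Finset.mem_union, Finset.mem_Icc]
      omega
    calc S.card ≤ (Finset.Icc (b + 1 - m) b ∪ Finset.Icc (a - m) (a - 1)).card :=
          Finset.card_le_card hsub
      _ ≤ (Finset.Icc (b + 1 - m) b).card + (Finset.Icc (a - m) (a - 1)).card :=
          Finset.card_union_le _ _
      _ ≤ 2 ^ i := by rw [Nat.card_Icc, Nat.card_Icc]; omega
  · have hsub : S ⊆ Finset.Icc a b ∪ (Finset.Icc a b).image (fun x => x - m) := by
      intro z hz
      obtain ⟨hne, hz1⟩ := key z hz
      simp only [Finset.mem_union, Finset.mem_Icc, Finset.mem_image]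
      by_cases h : a ≤ z ∧ z ≤ b
      · exact Or.inl h
      · right
        exact ⟨z + m, by omega, by omega⟩
    calc S.card ≤ (Finset.Icc a b ∪ (Finset.Icc a b).image (fun x => x - m)).card :=
          Finset.card_le_card hsub
      _ ≤ (Finset.Icc a b).card + ((Finset.Icc a b).image (fun x => x - m)).card :=
          Finset.card_union_le _ _
      _ ≤ (Finset.Icc a b).card + (Finset.Icc a b).card := by
          exact Nat.add_le_add_left Finset.card_image_le _
      _ = 2 * (Finset.Icc a b).card := by omega
end

section
/- Under the same block construction as before: if A ⊆ [k]^n, Ă = ∪_{x∈A} R_x ⊆ [l]^n, and C ⊆ [k]^n with C̆ = ∪_{x∈C} R_x, and if (1 + k/(l-k))^n ≤ 2 and |Ă Δ C̆|/l^n ≤ ε/2, then |A Δ C|/k^n ≤ ε. -/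
/-- The vertex set of the `ℓ¹`-grid `G_{k,n}`, as points of `ℕ^n` with coordinates in
`{1,…,k}`. -/
def gridPts (k n : ℕ) : Set (Fin n → ℕ) := {y | ∀ i, y i ∈ Finset.Icc 1 k}

/-- The block `R_x ⊆ [l]^n` of the point `x ∈ [k]^n`: those `y ∈ [l]^n` with
`⌈y_i k / l⌉ = x_i` for all `i` (`⌈a/l⌉ = (a + l - 1)/l` in ℕ). -/
def block (k l n : ℕ) (x : Fin n → ℕ) : Set (Fin n → ℕ) :=
  {y | y ∈ gridPts l n ∧ ∀ i, (y i * k + l - 1) / l = x i}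

/-!
Write `g y = (⌈y_i k / l⌉)_i`. Then `Ă = [l]^n ∩ g⁻¹ A`, hence `Ă Δ C̆ = [l]^n ∩ g⁻¹ (A Δ C)`
is the disjoint union of the blocks `R_x`, `x ∈ A Δ C`. Each block is a product of integer
intervals of length at least `⌊l/k⌋ ≥ (l - k)/k`, so `|A Δ C| ((l - k)/k)^n ≤ |Ă Δ C̆|`.
Dividing by `(l - k)^n = l^n / (1 + k/(l - k))^n ≥ l^n / 2` gives
`|A Δ C|/k^n ≤ 2 |Ă Δ C̆|/l^n ≤ ε`.
-/

open Finset in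
theorem Set.ncard_mul_le_ncard_inter_preimage {α β : Type*} {f : α → β} {s : Set α}
    {t : Set β} (hs : s.Finite) (ht : t.Finite) {m : ℕ} (h : ∀ b ∈ t, m ≤ (s ∩ f ⁻¹' {b}).ncard) :
    t.ncard * m ≤ (s ∩ f ⁻¹' t).ncard := by
  classical
  lift s to Finset α using hs
  lift t to Finset β using ht
  have hfibre (b : β) : (↑s ∩ f ⁻¹' {b} : Set α) = ↑{a ∈ s | f a = b} := by ext; simp
  have hst : (↑s ∩ f ⁻¹' ↑t : Set α) = ↑{a ∈ s | f a ∈ t} := by ext; simp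
  have hmaps : Set.MapsTo f ↑{a ∈ s | f a ∈ t} ↑t := fun a ha ↦ (mem_filter.1 ha).2
  rw [hst, Set.ncard_coe_finset, Set.ncard_coe_finset, card_eq_sum_card_fiberwise hmaps,
    ← smul_eq_mul]
  refine card_nsmul_le_sum _ _ _ fun b hb ↦ (h b hb).trans_eq ?_
  rw [filter_filter, hfibre, Set.ncard_coe_finset]
  congr 1
  exact filter_congr fun a _ ↦ ⟨fun h ↦ ⟨h ▸ hb, h⟩, fun h ↦ h.2⟩

theorem gridPts_eq_piFinset (k n : ℕ) :
    gridPts k n = ↑(Fintype.piFinset fun _ : Fin n ↦ Finset.Icc 1 k) := by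
  ext y
  simp only [gridPts, Set.mem_ofPred_eq, Finset.mem_coe, Fintype.mem_piFinset]

theorem gridPts_finite (k n : ℕ) : (gridPts k n).Finite :=
  gridPts_eq_piFinset k n ▸ Finset.finite_toSet _

def blockIndex (k l n : ℕ) (y : Fin n → ℕ) : Fin n → ℕ := fun i ↦ (y i * k + l - 1) / l

theorem block_eq_inter_preimage (k l n : ℕ) (x : Fin n → ℕ) :
    block k l n x = gridPts l n ∩ blockIndex k l n ⁻¹' {x} := by
  ext y
  simp [block, blockIndex, funext_iff]

theorem biUnion_block_eq_inter_preimage (k l n : ℕ) (A : Set (Fin n → ℕ)) :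
    ⋃ x ∈ A, block k l n x = gridPts l n ∩ blockIndex k l n ⁻¹' A := by
  simp only [block_eq_inter_preimage, ← Set.inter_iUnion₂, Set.biUnion_preimage_singleton]

theorem symmDiff_biUnion_block (k l n : ℕ) (A C : Set (Fin n → ℕ)) :
    symmDiff (⋃ x ∈ A, block k l n x) (⋃ x ∈ C, block k l n x) =
      gridPts l n ∩ blockIndex k l n ⁻¹' symmDiff A C := by
  rw [biUnion_block_eq_inter_preimage, biUnion_block_eq_inter_preimage, Set.preimage_symmDiff,
    Set.inter_symmDiff_distrib_left]

theorem ceil_mul_div_eq_of_mem_Ioc {k l j y : ℕ} (hk : 0 < k) (hkl : k ≤ l) (hj : 1 ≤ j)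
    (hjk : j ≤ k) (hy : y ∈ Finset.Ioc ((j - 1) * l / k) (j * l / k)) :
    y ∈ Finset.Icc 1 l ∧ (y * k + l - 1) / l = j := by
  rw [Finset.mem_Ioc, Nat.div_lt_iff_lt_mul hk, Nat.le_div_iff_mul_le hk] at hy
  obtain ⟨hlow, hup⟩ := hy
  have hl : 0 < l := hk.trans_le hkl
  have hjl : (j - 1) * l = j * l - l := Nat.sub_one_mul j l
  have hljl : l ≤ j * l := Nat.le_mul_of_pos_left l hj
  have hy1 : 1 ≤ y := Nat.pos_of_ne_zero fun h ↦ by simp [h] at hlow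
  have hyl : y ≤ l := Nat.le_of_mul_le_mul_right
    (hup.trans ((Nat.mul_le_mul_right l hjk).trans_eq (Nat.mul_comm k l))) hk
  refine ⟨Finset.mem_Icc.2 ⟨hy1, hyl⟩, Nat.div_eq_of_lt_le ?_ ?_⟩
  · omega
  · rw [Nat.succ_mul]
    omega

theorem div_le_card_Ioc (k l j : ℕ) (hj : 1 ≤ j) :
    l / k ≤ (Finset.Ioc ((j - 1) * l / k) (j * l / k)).card := by
  have hjl : (j - 1) * l + l = j * l := by
    rw [← Nat.succ_mul, Nat.succ_eq_add_one, Nat.sub_add_cancel hj]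
  have h : (j - 1) * l / k + l / k ≤ ((j - 1) * l + l) / k := Nat.div_add_div_le_add_div
  rw [hjl] at h
  rw [Nat.card_Ioc]
  omega

theorem pow_div_le_ncard_block {k l n : ℕ} (hk : 0 < k) (hkl : k ≤ l) {x : Fin n → ℕ}
    (hx : x ∈ gridPts k n) : (l / k) ^ n ≤ (block k l n x).ncard := by
  classical
  have hxk (i : Fin n) : 1 ≤ x i ∧ x i ≤ k := Finset.mem_Icc.1 (hx i)
  set box := Fintype.piFinset fun i ↦ Finset.Ioc ((x i - 1) * l / k) (x i * l / k)
  have hbox : (↑box : Set (Fin n → ℕ)) ⊆ block k l n x := fun y hy ↦ by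
    have hyi (i : Fin n) := ceil_mul_div_eq_of_mem_Ioc hk hkl (hxk i).1 (hxk i).2
      (Fintype.mem_piFinset.1 (Finset.mem_coe.1 hy) i)
    exact ⟨fun i ↦ (hyi i).1, fun i ↦ (hyi i).2⟩
  have hfin : (block k l n x).Finite := (gridPts_finite l n).subset fun _ hy ↦ hy.1
  calc (l / k) ^ n = (l / k) ^ (Finset.univ : Finset (Fin n)).card := by simp
    _ ≤ box.card := by
      rw [Fintype.card_piFinset]
      exact Finset.pow_card_le_prod _ _ _ fun i _ ↦ div_le_card_Ioc k l _ (hxk i).1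
    _ ≤ (block k l n x).ncard := by
      rw [← Set.ncard_coe_finset]
      exact Set.ncard_le_ncard hbox hfin

theorem ncard_mul_le_ncard_symmDiff_biUnion_block {k l n : ℕ} (hk : 0 < k) (hkl : k ≤ l)
    {A C : Set (Fin n → ℕ)} (hA : A ⊆ gridPts k n) (hC : C ⊆ gridPts k n) :
    (symmDiff A C).ncard * (l / k) ^ n ≤
      (symmDiff (⋃ x ∈ A, block k l n x) (⋃ x ∈ C, block k l n x)).ncard := by
  have hAC : symmDiff A C ⊆ gridPts k n :=
    Set.symmDiff_subset_union.trans (Set.union_subset hA hC)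
  rw [symmDiff_biUnion_block]
  refine Set.ncard_mul_le_ncard_inter_preimage (gridPts_finite l n)
    ((gridPts_finite k n).subset hAC) fun x hx ↦ ?_
  rw [← block_eq_inter_preimage]
  exact pow_div_le_ncard_block hk hkl (hAC hx)

theorem sub_div_le_natCast_div {k l : ℕ} (hk : 0 < k) :
    ((l : ℝ) - k) / k ≤ (l / k : ℕ) := by
  have h : (l : ℝ) < (l / k : ℕ) * k + k := by exact_mod_cast Nat.lt_div_mul_add hk
  rw [div_le_iff₀ (by positivity)]
  linarith

theorem div_pow_le_of_mul_sub_div_pow_le {k l s S ε : ℝ} {n : ℕ} (hk : 0 < k) (hkl : k < l)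
    (hs : 0 ≤ s) (hsS : s * ((l - k) / k) ^ n ≤ S)
    (hcond : (1 + k / (l - k)) ^ n ≤ 2) (hS : S / l ^ n ≤ ε / 2) :
    s / k ^ n ≤ ε := by
  have hl : 0 < l := hk.trans hkl
  have hlk : 0 < l - k := sub_pos.2 hkl
  have hratio : 1 + k / (l - k) = l / (l - k) := by field_simp; ring
  have hS0 : 0 ≤ S / l ^ n :=
    div_nonneg ((mul_nonneg hs (by positivity)).trans hsS) (by positivity)
  calc s / k ^ n = s * ((l - k) / k) ^ n / (l - k) ^ n := by
        rw [div_pow]; field_simp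
    _ ≤ S / (l - k) ^ n := by gcongr
    _ = S / l ^ n * (1 + k / (l - k)) ^ n := by
        rw [hratio, div_pow]; field_simp
    _ ≤ S / l ^ n * 2 := by gcongr
    _ ≤ ε / 2 * 2 := by gcongr
    _ = ε := by ring

theorem stmt19_general (k l n : ℕ) (hk : 2 ≤ k) (hl : k < l)
    (hcond : (1 + (k : ℝ) / ((l : ℝ) - k)) ^ n ≤ 2)
    (A C : Set (Fin n → ℕ)) (hA : A ⊆ gridPts k n) (hC : C ⊆ gridPts k n) (ε : ℝ)
    (hΔ : ((symmDiff (⋃ x ∈ A, block k l n x) (⋃ x ∈ C, block k l n x)).ncard : ℝ) /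
        (l : ℝ) ^ n ≤ ε / 2) :
    ((symmDiff A C).ncard : ℝ) / (k : ℝ) ^ n ≤ ε := by
  have hk0 : 0 < k := by omega
  have hcount : ((symmDiff A C).ncard : ℝ) * (l / k : ℕ) ^ n ≤
      (symmDiff (⋃ x ∈ A, block k l n x) (⋃ x ∈ C, block k l n x)).ncard := by
    exact_mod_cast ncard_mul_le_ncard_symmDiff_biUnion_block hk0 hl.le hA hC
  refine div_pow_le_of_mul_sub_div_pow_le (by exact_mod_cast hk0) (by exact_mod_cast hl)
    (Nat.cast_nonneg _) (le_trans ?_ hcount) hcond hΔ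
  have hlk : (0 : ℝ) ≤ ((l : ℝ) - k) / k :=
    div_nonneg (sub_nonneg.2 (by exact_mod_cast hl.le)) (Nat.cast_nonneg k)
  gcongr
  exact sub_div_le_natCast_div hk0

/-- Under the block construction, if `(1 + k/(l-k))^n ≤ 2` and
`|Ă Δ C̆|/l^n ≤ ε/2`, then `|A Δ C|/k^n ≤ ε`. -/
theorem stmt19 (k l n : ℕ) (hn : 0 < n) (hk : 2 ≤ k) (hl : k < l)
    (hcond : (1 + (k : ℝ) / ((l : ℝ) - k)) ^ n ≤ 2)
    (A C : Set (Fin n → ℕ)) (hA : A ⊆ gridPts k n) (hC : C ⊆ gridPts k n) (ε : ℝ)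
    (hΔ : ((symmDiff (⋃ x ∈ A, block k l n x) (⋃ x ∈ C, block k l n x)).ncard : ℝ) /
        (l : ℝ) ^ n ≤ ε / 2) :
    ((symmDiff A C).ncard : ℝ) / (k : ℝ) ^ n ≤ ε :=
  stmt19_general k l n hk hl hcond A C hA hC ε hΔ
end
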